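/- arXiv:2212.07565 — 2 statements merged into one kernel-verified Lean document; each statement's English description precedes it below -/
import Mathlib

section
/- Let G be a compact subgroup of the group of invertible linear maps on ℝⁿ. Let B ⊆ ℝⁿ satisfy ΛB = B for all Λ ∈ G, let f : ℝⁿ → ℝⁿ be such that f(Λx) = Λ f(x) for all x ∈ B and Λ ∈ G, and let Φ : ℝⁿ → ℝ satisfy Φ(Λx) = Φ(x) for all x ∈ B and Λ ∈ G. If there exist a continuously differentiable V : ℝⁿ → ℝ and U ∈ ℝ such that U − Φ(x) − f(x)·∇V(x) ≥ 0 for all x ∈ B, then there exists a continuously differentiable V̂ : ℝⁿ → ℝ with V̂(Λx) = V̂(x) for all x ∈ ℝⁿ and Λ ∈ G such that U − Φ(x) − f(x)·∇V̂(x) ≥ 0 for all x ∈ B. -/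
open scoped RealInnerProductSpace
open MeasureTheory Topology Set Filter

/-!
Average `V` over the group: `V̂ x = ∫ V (Λ x) dμ(Λ)` for the normalized Haar measure `μ` of `G`.
Right invariance of `μ` makes `V̂` invariant. Compactness of `G` lets one differentiate under the
integral, `DV̂(x) v = ∫ DV(Λ x) (Λ v) dμ(Λ)`, and for `x ∈ B` equivariance of `f` turns the
integrand at `v = f x` into `DV(Λ x) (f (Λ x)) ≤ U - Φ (Λ x) = U - Φ x`, so averaging preserves
the inequality.
-/

theorem exists_eventually_forall_norm_le_of_continuous_uncurry {X K F : Type*}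
    [TopologicalSpace X] [TopologicalSpace K] [CompactSpace K] [SeminormedAddCommGroup F]
    {g : X → K → F} (hg : Continuous (Function.uncurry g)) (x₀ : X) :
    ∃ C, ∀ᶠ x in 𝓝 x₀, ∀ k, ‖g x k‖ ≤ C := by
  obtain ⟨C, hC⟩ := (isCompact_range (hg.comp (Continuous.prodMk_right x₀)).norm).bddAbove
  refine ⟨C + 1, ?_⟩
  have hP := isCompact_univ.eventually_forall_of_forall_eventually
    (P := fun x k => ‖g x k‖ < C + 1) fun k _ =>
      hg.norm.continuousAt.eventually_lt continuousAt_const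
        ((hC (mem_range_self k)).trans_lt (lt_add_one C))
  exact hP.mono fun x hx k => (hx k (mem_univ k)).le

section ParametricIntegral

variable {K E F : Type*} [TopologicalSpace K] [CompactSpace K]
  [MeasurableSpace K] [OpensMeasurableSpace K] {μ : Measure K} [IsFiniteMeasure μ]
  [NormedAddCommGroup E] [NormedSpace ℝ E] [NormedAddCommGroup F]

theorem Continuous.integrable_of_compactSpace {g : K → F} (hg : Continuous g) :
    Integrable g μ :=
  hg.integrable_of_hasCompactSupport (HasCompactSupport.of_compactSpace g)

theorem continuous_integral_of_continuous_uncurry_of_compactSpace [NormedSpace ℝ F]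
    {X : Type*} [TopologicalSpace X] [FirstCountableTopology X] {g : X → K → F}
    (hg : Continuous (Function.uncurry g)) :
    Continuous fun x => ∫ k, g x k ∂μ := by
  refine continuous_iff_continuousAt.2 fun x₀ => ?_
  obtain ⟨C, hC⟩ := exists_eventually_forall_norm_le_of_continuous_uncurry hg x₀
  exact continuousAt_of_dominated
    (Eventually.of_forall fun x =>
      (hg.comp (Continuous.prodMk_right x)).integrable_of_compactSpace.aestronglyMeasurable)
    (hC.mono fun x hx => ae_of_all μ hx) (integrable_const C)
    (ae_of_all μ fun k => (hg.comp (Continuous.prodMk_left k)).continuousAt)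

variable [NormedSpace ℝ F]

theorem hasFDerivAt_integral_of_continuous_uncurry_of_compactSpace {g : E → K → F}
    {g' : E → K → E →L[ℝ] F} (hg : Continuous (Function.uncurry g))
    (hg' : Continuous (Function.uncurry g')) (hderiv : ∀ x k, HasFDerivAt (g · k) (g' x k) x)
    (x₀ : E) :
    HasFDerivAt (fun x => ∫ k, g x k ∂μ) (∫ k, g' x₀ k ∂μ) x₀ := by
  obtain ⟨C, hC⟩ := exists_eventually_forall_norm_le_of_continuous_uncurry hg' x₀
  have hint : ∀ x, Integrable (g x) μ := fun x =>
    (hg.comp (Continuous.prodMk_right x)).integrable_of_compactSpace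
  exact hasFDerivAt_integral_of_dominated_of_fderiv_le hC
    (Eventually.of_forall fun x => (hint x).aestronglyMeasurable) (hint x₀)
    (hg'.comp (Continuous.prodMk_right x₀)).integrable_of_compactSpace.aestronglyMeasurable
    (ae_of_all μ fun k x hx => hx k) (integrable_const C)
    (ae_of_all μ fun k x _ => hderiv x k)

end ParametricIntegral

theorem exists_isProbabilityMeasure_isMulRightInvariant (K : Type*) [Group K]
    [TopologicalSpace K] [IsTopologicalGroup K] [CompactSpace K] [MeasurableSpace K]
    [BorelSpace K] : ∃ μ : Measure K, IsProbabilityMeasure μ ∧ μ.IsMulRightInvariant := by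
  let ν := Measure.haarMeasure (⊤ : TopologicalSpace.PositiveCompacts K)
  have hν : ν ↑(⊤ : TopologicalSpace.PositiveCompacts K) = 1 := Measure.haarMeasure_self
  rw [TopologicalSpace.PositiveCompacts.coe_top] at hν
  have : IsProbabilityMeasure ν := ⟨hν⟩
  exact ⟨ν.inv, Measure.isProbabilityMeasure_map continuous_inv.aemeasurable, inferInstance⟩

section OrbitAverage

variable {K E F : Type*} [Group K] [MeasurableSpace K] (μ : Measure K)
  [NormedAddCommGroup E] [NormedSpace ℝ E] [NormedAddCommGroup F] [NormedSpace ℝ F]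
  (ρ : K →* E ≃L[ℝ] E)

noncomputable def orbitAverage (V : E → F) (x : E) : F :=
  ∫ k, V (ρ k x) ∂μ

theorem orbitAverage_map [MeasurableMul K] [μ.IsMulRightInvariant] (V : E → F) (g : K)
    (x : E) : orbitAverage μ ρ V (ρ g x) = orbitAverage μ ρ V x := by
  simp only [orbitAverage]
  rw [← integral_mul_right_eq_self (fun k => V (ρ k x)) g]
  simp only [map_mul]
  rfl

variable [TopologicalSpace K] {ρ} (hρ : Continuous fun k => (ρ k : E →L[ℝ] E))
include hρ

omit [MeasurableSpace K] in
theorem continuous_uncurry_fderiv_comp_orbit {V : E → F} (hV : ContDiff ℝ 1 V) :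
    Continuous (Function.uncurry fun x k => (fderiv ℝ V (ρ k x)).comp (ρ k : E →L[ℝ] E)) :=
  ((hV.continuous_fderiv one_ne_zero).comp
    ((hρ.comp continuous_snd).clm_apply continuous_fst)).clm_comp (hρ.comp continuous_snd)

variable [CompactSpace K] [OpensMeasurableSpace K] [IsFiniteMeasure μ]

theorem hasFDerivAt_orbitAverage {V : E → F} (hV : ContDiff ℝ 1 V) (x : E) :
    HasFDerivAt (orbitAverage μ ρ V)
      (∫ k, (fderiv ℝ V (ρ k x)).comp (ρ k : E →L[ℝ] E) ∂μ) x :=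
  hasFDerivAt_integral_of_continuous_uncurry_of_compactSpace (g := fun y k => V (ρ k y))
    (hV.continuous.comp ((hρ.comp continuous_snd).clm_apply continuous_fst))
    (continuous_uncurry_fderiv_comp_orbit hρ hV)
    (fun y k => (hV.differentiable one_ne_zero _).hasFDerivAt.comp y
      (ρ k : E →L[ℝ] E).hasFDerivAt) x

theorem contDiff_orbitAverage {V : E → F} (hV : ContDiff ℝ 1 V) :
    ContDiff ℝ 1 (orbitAverage μ ρ V) := by
  have hF := hasFDerivAt_orbitAverage μ hρ hV
  refine contDiff_one_iff_fderiv.2 ⟨fun x => (hF x).differentiableAt, ?_⟩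
  rw [funext fun x => (hF x).fderiv]
  exact continuous_integral_of_continuous_uncurry_of_compactSpace
    (continuous_uncurry_fderiv_comp_orbit hρ hV)

theorem fderiv_orbitAverage_apply_le [IsProbabilityMeasure μ] {V : E → ℝ} (hV : ContDiff ℝ 1 V)
    {B : Set E} {f : E → E} {ψ : E → ℝ} (hB : ∀ k, MapsTo (ρ k) B B)
    (hf : ∀ k, ∀ x ∈ B, f (ρ k x) = ρ k (f x)) (hψ : ∀ k, ∀ x ∈ B, ψ (ρ k x) = ψ x)
    (hVψ : ∀ x ∈ B, fderiv ℝ V x (f x) ≤ ψ x) {x : E} (hx : x ∈ B) :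
    fderiv ℝ (orbitAverage μ ρ V) x (f x) ≤ ψ x := by
  have hcont : Continuous fun k => (fderiv ℝ V (ρ k x)).comp (ρ k : E →L[ℝ] E) :=
    (continuous_uncurry_fderiv_comp_orbit hρ hV).comp (Continuous.prodMk_right x)
  rw [(hasFDerivAt_orbitAverage μ hρ hV x).fderiv,
    ContinuousLinearMap.integral_apply hcont.integrable_of_compactSpace]
  calc ∫ k, (fderiv ℝ V (ρ k x)).comp (ρ k : E →L[ℝ] E) (f x) ∂μ ≤ ∫ _k, ψ x ∂μ := by
        refine integral_mono (hcont.clm_apply continuous_const).integrable_of_compactSpace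
          (integrable_const _) fun k => ?_
        have := hVψ (ρ k x) (hB k hx)
        rwa [hf k x hx, hψ k x hx] at this
    _ = ψ x := by simp

end OrbitAverage

/- `E ≃L[ℝ] E` carries no topology, so `G` is turned into a compact topological group through its
copy among the units of `E →L[ℝ] E`. -/
theorem compactSpace_comap_unitsEquiv {E : Type*} [NormedAddCommGroup E] [NormedSpace ℝ E]
    [CompleteSpace E] {G : Subgroup (E ≃L[ℝ] E)}
    (hG : IsCompact ((fun Λ : E ≃L[ℝ] E => (Λ : E →L[ℝ] E)) '' (G : Set _))) :
    CompactSpace (G.comap (ContinuousLinearEquiv.unitsEquiv ℝ E).toMonoidHom) := by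
  have hemb : IsEmbedding fun k : G.comap (ContinuousLinearEquiv.unitsEquiv ℝ E).toMonoidHom =>
      ((k : (E →L[ℝ] E)ˣ) : E →L[ℝ] E) :=
    Units.isOpenEmbedding_val.isEmbedding.comp IsEmbedding.subtypeVal
  rw [← isCompact_univ_iff, hemb.isCompact_iff, image_univ]
  convert hG using 1
  ext A
  constructor
  · rintro ⟨k, rfl⟩
    exact ⟨_, k.2, rfl⟩
  · rintro ⟨Λ, hΛ, rfl⟩
    refine ⟨⟨(ContinuousLinearEquiv.unitsEquiv ℝ E).symm Λ, by simpa using hΛ⟩, ?_⟩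
    exact congrArg ((↑) : (E ≃L[ℝ] E) → E →L[ℝ] E)
      ((ContinuousLinearEquiv.unitsEquiv ℝ E).apply_symm_apply Λ)

/-- Symmetrization of auxiliary functions: let `G` be a compact subgroup of the group of
invertible linear maps on `ℝⁿ`, let `B` be `G`-invariant, `f` `G`-equivariant on `B`, and
`Φ` `G`-invariant on `B`. If a continuously differentiable `V` and a constant `U` satisfy
`U − Φ(x) − f(x)·∇V(x) ≥ 0` on `B`, then there is a continuously differentiable
`G`-invariant `V̂` satisfying the same inequality on `B`. -/
theorem statement13 {n : ℕ}
    (G : Subgroup (EuclideanSpace ℝ (Fin n) ≃L[ℝ] EuclideanSpace ℝ (Fin n)))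
    (hGcomp : IsCompact ((fun Λ : EuclideanSpace ℝ (Fin n) ≃L[ℝ] EuclideanSpace ℝ (Fin n) =>
      (Λ : EuclideanSpace ℝ (Fin n) →L[ℝ] EuclideanSpace ℝ (Fin n))) '' (G : Set _)))
    (B : Set (EuclideanSpace ℝ (Fin n)))
    (hB : ∀ Λ ∈ G, (Λ : EuclideanSpace ℝ (Fin n) ≃L[ℝ] EuclideanSpace ℝ (Fin n)) '' B = B)
    (f : EuclideanSpace ℝ (Fin n) → EuclideanSpace ℝ (Fin n))
    (hf : ∀ Λ ∈ G, ∀ x ∈ B,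
      f ((Λ : EuclideanSpace ℝ (Fin n) ≃L[ℝ] EuclideanSpace ℝ (Fin n)) x) = Λ (f x))
    (Φ : EuclideanSpace ℝ (Fin n) → ℝ)
    (hΦ : ∀ Λ ∈ G, ∀ x ∈ B,
      Φ ((Λ : EuclideanSpace ℝ (Fin n) ≃L[ℝ] EuclideanSpace ℝ (Fin n)) x) = Φ x)
    (V : EuclideanSpace ℝ (Fin n) → ℝ) (hV : ContDiff ℝ 1 V) (U : ℝ)
    (hineq : ∀ x ∈ B, 0 ≤ U - Φ x - ⟪f x, gradient V x⟫) :
    ∃ Vh : EuclideanSpace ℝ (Fin n) → ℝ, ContDiff ℝ 1 Vh ∧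
      (∀ Λ ∈ G, ∀ x : EuclideanSpace ℝ (Fin n),
        Vh ((Λ : EuclideanSpace ℝ (Fin n) ≃L[ℝ] EuclideanSpace ℝ (Fin n)) x) = Vh x) ∧
      ∀ x ∈ B, 0 ≤ U - Φ x - ⟪f x, gradient Vh x⟫ := by
  let e := ContinuousLinearEquiv.unitsEquiv ℝ (EuclideanSpace ℝ (Fin n))
  let H := G.comap e.toMonoidHom
  have : CompactSpace H := compactSpace_comap_unitsEquiv hGcomp
  borelize ↥H
  obtain ⟨μ, _, _⟩ := exists_isProbabilityMeasure_isMulRightInvariant H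
  let ρ := e.toMonoidHom.comp H.subtype
  have hρ : Continuous fun k =>
      (ρ k : EuclideanSpace ℝ (Fin n) →L[ℝ] EuclideanSpace ℝ (Fin n)) :=
    Units.continuous_val.comp continuous_subtype_val
  refine ⟨orbitAverage μ ρ V, contDiff_orbitAverage μ hρ hV, fun Λ hΛ x => ?_, fun x hx => ?_⟩
  · have hk : ρ ⟨e.symm Λ, by simpa [H] using hΛ⟩ = Λ := e.apply_symm_apply Λ
    rw [← hk, orbitAverage_map]
  · simp only [inner_gradient_right, conj_trivial, sub_nonneg] at hineq ⊢
    exact fderiv_orbitAverage_apply_le μ hρ hV (ψ := fun y => U - Φ y)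
      (fun k => (mapsTo_image _ B).mono_right (hB _ k.2).subset) (fun k => hf _ k.2)
      (fun k y hy => congrArg (U - ·) (hΦ _ k.2 y hy)) hineq hx
end

section
/- Let G be a compact subgroup of the group of invertible linear maps on ℝⁿ, with Haar probability measure m. If σ ∈ ℝ[x₁,…,x_n] is an SOS polynomial, then the function σ̂(x) = ∫_G σ(Λx) dm(Λ) is again a polynomial in x, and it is SOS. -/
open MvPolynomial MeasureTheory

/-- A polynomial is a sum of squares if it is a finite sum of squares of polynomials. -/
def IsSOS {σ : Type*} (p : MvPolynomial σ ℝ) : Prop :=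
  ∃ (K : ℕ) (q : Fin K → MvPolynomial σ ℝ), p = ∑ k, q k ^ 2

noncomputable instance {n : ℕ} : MeasurableSpace (Matrix (Fin n) (Fin n) ℝ) :=
  inferInstanceAs (MeasurableSpace (Fin n → Fin n → ℝ))

/-!
Expand `q (A x) = ∑ₛ fₛ(A) xˢ`, where the `fₛ` are polynomials in the entries of `A`. Then
`∫ q(Ax)² dm = ∑ₛₜ Mₛₜ xˢ xᵗ` with `Mₛₜ = ∫ fₛ fₜ dm`, a Gram matrix in `L²(m)` and hence
positive semidefinite; writing `M = ∑ₖ vₖ vₖᵀ` turns this into `∑ₖ (∑ₛ vₖₛ xˢ)²`. Continuity of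
the `fₛ` and compactness of the support of `m` make all the integrals finite.
-/

instance {n : ℕ} : BorelSpace (Matrix (Fin n) (Fin n) ℝ) :=
  inferInstanceAs (BorelSpace (Fin n → Fin n → ℝ))

namespace IsSOS

variable {σ : Type*}

theorem zero : IsSOS (0 : MvPolynomial σ ℝ) := ⟨0, ![], by simp⟩

theorem add {p q : MvPolynomial σ ℝ} (hp : IsSOS p) (hq : IsSOS q) : IsSOS (p + q) := by
  obtain ⟨K₁, q₁, rfl⟩ := hp
  obtain ⟨K₂, q₂, rfl⟩ := hq
  exact ⟨K₁ + K₂, Fin.append q₁ q₂, by simp [Fin.sum_univ_add]⟩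

theorem sum {ι : Type*} (s : Finset ι) {p : ι → MvPolynomial σ ℝ}
    (hp : ∀ i ∈ s, IsSOS (p i)) : IsSOS (∑ i ∈ s, p i) :=
  Finset.sum_induction p IsSOS (fun _ _ => add) zero hp

end IsSOS

open scoped Matrix

section Gram

variable {Ω ι : Type*} [MeasurableSpace Ω] [Fintype ι]

noncomputable def integralGram (μ : Measure Ω) (f : ι → Ω → ℝ) : Matrix ι ι ℝ :=
  Matrix.of fun i j => ∫ ω, f i ω * f j ω ∂μ

variable {μ : Measure Ω} {f : ι → Ω → ℝ}

theorem integral_sq_sum_mul_eq_dotProduct_integralGram_mulVec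
    (hf : ∀ i j, Integrable (fun ω => f i ω * f j ω) μ) (c : ι → ℝ) :
    ∫ ω, (∑ i, f i ω * c i) ^ 2 ∂μ = c ⬝ᵥ integralGram μ f *ᵥ c := by
  have hsq : ∀ ω, (∑ i, f i ω * c i) ^ 2 = ∑ i, c i * ∑ j, f i ω * f j ω * c j := by
    intro ω
    rw [sq, Finset.sum_mul_sum]
    refine Finset.sum_congr rfl fun i _ => ?_
    rw [Finset.mul_sum]
    exact Finset.sum_congr rfl fun j _ => by ring
  have hrow : ∀ i, Integrable (fun ω => ∑ j, f i ω * f j ω * c j) μ := fun i =>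
    integrable_finsetSum _ fun j _ => (hf i j).mul_const _
  simp_rw [hsq]
  rw [integral_finsetSum _ fun i _ => (hrow i).const_mul _]
  refine Finset.sum_congr rfl fun i _ => ?_
  rw [integral_const_mul, integral_finsetSum _ fun j _ => (hf i j).mul_const _]
  simp [Matrix.mulVec, dotProduct, integralGram, integral_mul_const]

theorem posSemidef_integralGram (hf : ∀ i j, Integrable (fun ω => f i ω * f j ω) μ) :
    (integralGram μ f).PosSemidef := by
  refine Matrix.PosSemidef.of_dotProduct_mulVec_nonneg ?_ fun c => ?_
  · ext i j
    simp [integralGram, mul_comm]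
  · rw [star_trivial, ← integral_sq_sum_mul_eq_dotProduct_integralGram_mulVec hf]
    exact integral_nonneg fun _ => sq_nonneg _

theorem exists_isSOS_integral_sq_sum_mul_eval {σ : Type*} (w : ι → MvPolynomial σ ℝ)
    (hf : ∀ i j, Integrable (fun ω => f i ω * f j ω) μ) :
    ∃ p : MvPolynomial σ ℝ, IsSOS p ∧
      ∀ x, ∫ ω, (∑ i, f i ω * eval x (w i)) ^ 2 ∂μ = eval x p := by
  obtain ⟨K, v, hv⟩ := Matrix.posSemidef_iff_eq_sum_vecMulVec.mp (posSemidef_integralGram hf)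
  refine ⟨∑ k, (∑ i, C (v k i) * w i) ^ 2, ⟨K, _, rfl⟩, fun x => ?_⟩
  rw [integral_sq_sum_mul_eq_dotProduct_integralGram_mulVec hf, hv]
  set c : ι → ℝ := fun i => eval x (w i)
  calc c ⬝ᵥ (∑ k, Matrix.vecMulVec (v k) (star (v k))) *ᵥ c = ∑ k, (v k ⬝ᵥ c) ^ 2 := by
        simp only [Matrix.sum_mulVec, dotProduct_sum, star_trivial, Matrix.vecMulVec_mulVec]
        simp [dotProduct_comm, sq]
    _ = eval x (∑ k, (∑ i, C (v k i) * w i) ^ 2) := by simp [dotProduct, c]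

end Gram

theorem Continuous.integrable_of_measure_compl_eq_zero {X : Type*} [TopologicalSpace X]
    [T2Space X] [MeasurableSpace X] [OpensMeasurableSpace X] {μ : Measure X} [IsFiniteMeasure μ]
    {K : Set X} (hK : IsCompact K) (hμ : μ Kᶜ = 0) {f : X → ℝ} (hf : Continuous f) :
    Integrable f μ := by
  have hfK : IntegrableOn f K μ := hf.continuousOn.integrableOn_compact hK
  rwa [IntegrableOn, Measure.restrict_eq_self_of_ae_mem (mem_ae_iff.2 hμ)] at hfK

section LinearSubstitution

variable {ι κ : Type*} [Fintype κ]

noncomputable def linearSubst (q : MvPolynomial ι ℝ) : MvPolynomial κ (MvPolynomial (ι × κ) ℝ) :=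
  aeval (fun i => ∑ j, C (X (i, j)) * X j) q

theorem eval₂_linearSubst (q : MvPolynomial ι ℝ) (A : Matrix ι κ ℝ) (x : κ → ℝ) :
    eval₂ (eval fun ij => A ij.1 ij.2) x (linearSubst q) = eval (A *ᵥ x) q := by
  induction q using MvPolynomial.induction_on with
  | C r => simp [linearSubst]
  | add p q hp hq => simp_all [linearSubst]
  | mul_X p i hp => simp_all [linearSubst, Matrix.mulVec, dotProduct]

theorem eval_mulVec_eq_sum (q : MvPolynomial ι ℝ) (A : Matrix ι κ ℝ) (x : κ → ℝ) :
    eval (A *ᵥ x) q = ∑ s ∈ (linearSubst q).support,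
      eval (fun ij => A ij.1 ij.2) (coeff s (linearSubst q)) * eval x (monomial s 1) := by
  rw [← eval₂_linearSubst, eval₂_eq]
  simp [eval_monomial, Finsupp.prod]

end LinearSubstitution

theorem exists_isSOS_integral_sq_eval_mulVec {ι κ : Type*} [Fintype ι] [Fintype κ]
    [MeasurableSpace (Matrix ι κ ℝ)] [OpensMeasurableSpace (Matrix ι κ ℝ)]
    {μ : Measure (Matrix ι κ ℝ)} [IsFiniteMeasure μ] {K : Set (Matrix ι κ ℝ)}
    (hK : IsCompact K) (hμ : μ Kᶜ = 0) (q : MvPolynomial ι ℝ) :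
    ∃ p : MvPolynomial κ ℝ, IsSOS p ∧ ∀ x, ∫ A, eval (A *ᵥ x) q ^ 2 ∂μ = eval x p := by
  let P : MvPolynomial κ (MvPolynomial (ι × κ) ℝ) := linearSubst q
  let f : P.support → Matrix ι κ ℝ → ℝ :=
    fun s A => eval (fun ij => A ij.1 ij.2) (coeff s P)
  have hf : ∀ s, Continuous (f s) := fun s =>
    (continuous_eval _).comp (continuous_pi fun ij => continuous_apply_apply ij.1 ij.2)
  obtain ⟨p, hp, hpx⟩ := exists_isSOS_integral_sq_sum_mul_eval (μ := μ) (f := f)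
    (fun s => monomial s.1 1)
    fun s t => ((hf s).mul (hf t)).integrable_of_measure_compl_eq_zero hK hμ
  refine ⟨p, hp, fun x => ?_⟩
  rw [← hpx]
  congr with A
  rw [eval_mulVec_eq_sum, ← Finset.sum_coe_sort]

theorem IsSOS.exists_isSOS_integral_eval_mulVec {ι κ : Type*} [Fintype ι] [Fintype κ]
    [MeasurableSpace (Matrix ι κ ℝ)] [OpensMeasurableSpace (Matrix ι κ ℝ)]
    {μ : Measure (Matrix ι κ ℝ)} [IsFiniteMeasure μ] {K : Set (Matrix ι κ ℝ)}
    (hK : IsCompact K) (hμ : μ Kᶜ = 0) {σ : MvPolynomial ι ℝ} (hσ : IsSOS σ) :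
    ∃ p : MvPolynomial κ ℝ, IsSOS p ∧ ∀ x, ∫ A, eval (A *ᵥ x) σ ∂μ = eval x p := by
  obtain ⟨N, q, rfl⟩ := hσ
  choose p hp hpx using fun k => exists_isSOS_integral_sq_eval_mulVec hK hμ (q k)
  refine ⟨∑ k, p k, IsSOS.sum _ fun k _ => hp k, fun x => ?_⟩
  have hint : ∀ k, Integrable (fun A : Matrix ι κ ℝ => eval (A *ᵥ x) (q k) ^ 2) μ :=
    fun k => (((continuous_eval _).comp (continuous_id.matrix_mulVec continuous_const)).pow 2
      ).integrable_of_measure_compl_eq_zero hK hμ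
  simp only [map_sum, map_pow]
  rw [integral_finsetSum _ fun k _ => hint k]
  exact Finset.sum_congr rfl fun k _ => hpx k x

theorem statement15_general {n : ℕ}
    (G : Subgroup (Matrix.GeneralLinearGroup (Fin n) ℝ))
    (hGcomp : IsCompact ((fun Λ : Matrix.GeneralLinearGroup (Fin n) ℝ =>
      (Λ : Matrix (Fin n) (Fin n) ℝ)) '' (G : Set _)))
    (m : Measure (Matrix (Fin n) (Fin n) ℝ))
    (hprob : IsProbabilityMeasure m)
    (hsupp : m ((fun Λ : Matrix.GeneralLinearGroup (Fin n) ℝ =>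
      (Λ : Matrix (Fin n) (Fin n) ℝ)) '' (G : Set _)) = 1)
    (σ : MvPolynomial (Fin n) ℝ) (hσ : IsSOS σ) :
    ∃ p : MvPolynomial (Fin n) ℝ, IsSOS p ∧
      ∀ x : Fin n → ℝ, (∫ A, eval (A.mulVec x) σ ∂m) = eval x p :=
  hσ.exists_isSOS_integral_eval_mulVec hGcomp
    ((prob_compl_eq_zero_iff hGcomp.measurableSet).2 hsupp)

/-- Averaging an SOS polynomial over a compact subgroup `G` of `GL(n,ℝ)` with respect to its
Haar probability measure `m` yields a polynomial, which is again SOS: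
`σ̂(x) = ∫_G σ(Λx) dm(Λ)` is a polynomial in `x` and is SOS. -/
theorem statement15 {n : ℕ}
    (G : Subgroup (Matrix.GeneralLinearGroup (Fin n) ℝ))
    (hGcomp : IsCompact ((fun Λ : Matrix.GeneralLinearGroup (Fin n) ℝ =>
      (Λ : Matrix (Fin n) (Fin n) ℝ)) '' (G : Set _)))
    (m : Measure (Matrix (Fin n) (Fin n) ℝ))
    (hprob : IsProbabilityMeasure m)
    (hsupp : m ((fun Λ : Matrix.GeneralLinearGroup (Fin n) ℝ =>
      (Λ : Matrix (Fin n) (Fin n) ℝ)) '' (G : Set _)) = 1)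
    (hleft : ∀ Λ ∈ G, MeasurePreserving
      (fun A : Matrix (Fin n) (Fin n) ℝ => (Λ : Matrix (Fin n) (Fin n) ℝ) * A) m m)
    (hright : ∀ Λ ∈ G, MeasurePreserving
      (fun A : Matrix (Fin n) (Fin n) ℝ => A * (Λ : Matrix (Fin n) (Fin n) ℝ)) m m)
    (σ : MvPolynomial (Fin n) ℝ) (hσ : IsSOS σ) :
    ∃ p : MvPolynomial (Fin n) ℝ, IsSOS p ∧
      ∀ x : Fin n → ℝ, (∫ A, eval (A.mulVec x) σ ∂m) = eval x p :=
  statement15_general G hGcomp m hprob hsupp σ hσ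
end
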